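/- arXiv:1206.4039 — 6 statements merged into one kernel-verified Lean document; each statement's English description precedes it below -/
import Mathlib

section
/- Let q ≥ 2 be an integer and let (T_e)_{e ∈ ℕ} be a family of subsets of the real interval [0,1] satisfying: (1) there exists an integer N ≥ 1 such that there is no strictly decreasing sequence t_1 > t_2 > ⋯ > t_N of real numbers with t_n ∈ T_{e_n} for some nondecreasing sequence of indices e_1 ≤ e_2 ≤ ⋯ ≤ e_N; and (2) whenever λ is an accumulation point of (T_e), the fractional part of qλ is also an accumulation point of (T_e). Then the set of accumulation points of (T_e) is finite and every accumulation point is a rational number. -/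
/-- The set of accumulation points of a family `T : ℕ → Set ℝ` of sets:
elements of `⋂ e', closure (⋃ e ≥ e', T e)`. -/
def famAccPts (T : ℕ → Set ℝ) : Set ℝ :=
  ⋂ e' : ℕ, closure (⋃ e ∈ Set.Ici e', T e)

lemma acc_near (T : ℕ → Set ℝ) {l : ℝ} (hl : l ∈ famAccPts T) (e' : ℕ) {ε : ℝ}
    (hε : 0 < ε) : ∃ e, e' ≤ e ∧ ∃ x ∈ T e, |x - l| < ε := by
  have h := Set.mem_iInter.mp hl e'
  rw [Metric.mem_closure_iff] at h
  obtain ⟨b, hb, hd⟩ := h ε hε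
  simp only [Set.mem_iUnion, Set.mem_Ici, exists_prop] at hb
  obtain ⟨e, he, hbe⟩ := hb
  exact ⟨e, he, b, hbe, by rwa [abs_sub_comm, ← Real.dist_eq]⟩

theorem stmt_0 (q : ℕ) (hq : 2 ≤ q) (T : ℕ → Set ℝ)
    (hT : ∀ e, T e ⊆ Set.Icc (0 : ℝ) 1)
    (h1 : ∃ N : ℕ, 1 ≤ N ∧
      ¬ ∃ (t : Fin N → ℝ) (e : Fin N → ℕ),
        StrictAnti t ∧ Monotone e ∧ ∀ n, t n ∈ T (e n))
    (h2 : ∀ l ∈ famAccPts T, Int.fract ((q : ℝ) * l) ∈ famAccPts T) :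
    (famAccPts T).Finite ∧ ∀ l ∈ famAccPts T, ∃ r : ℚ, (r : ℝ) = l := by
  obtain ⟨N, hN1, hN⟩ := h1
  have hNpos : 0 < N := hN1
  have hfin : (famAccPts T).Finite := by
    by_contra hinf
    have hinf' : (famAccPts T).Infinite := hinf
    obtain ⟨S, hS, hcard⟩ := hinf'.exists_subset_card_eq N
    haveI : Nonempty (Fin N) := ⟨⟨0, hNpos⟩⟩
    let o := S.orderIsoOfFin hcard
    let lam : Fin N → ℝ := fun i => (o i.rev : ℝ)
    have hlamA : ∀ i, lam i ∈ famAccPts T := fun i => hS (o i.rev).2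
    have hanti : StrictAnti lam := by
      intro i j hij
      have h' : j.rev < i.rev := Fin.rev_lt_rev.mpr hij
      exact_mod_cast o.strictMono h'
    let d : Fin N → ℝ := fun i => if h : (i : ℕ) + 1 < N then lam i - lam ⟨i + 1, h⟩ else 1
    have hd : ∀ i, 0 < d i := by
      intro i
      dsimp only [d]
      split
      · exact sub_pos.mpr (hanti (Fin.lt_def.mpr (Nat.lt_succ_self _)))
      · norm_num
    set ε : ℝ := (Finset.univ.inf' Finset.univ_nonempty d) / 3 with hεdef
    have hε : 0 < ε := by
      apply div_pos _ (by norm_num)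
      exact (Finset.lt_inf'_iff _).mpr fun i _ => hd i
    have hgap : ∀ i j : Fin N, i < j → lam j + 2 * ε < lam i := by
      intro i j hij
      have hval : (i : ℕ) < (j : ℕ) := hij
      have h1' : (i : ℕ) + 1 < N := lt_of_le_of_lt hval j.isLt
      have hle : lam j ≤ lam ⟨(i : ℕ) + 1, h1'⟩ := by
        rcases eq_or_lt_of_le (Nat.succ_le_of_lt hval) with hee | hlt
        · have : (⟨(i : ℕ) + 1, h1'⟩ : Fin N) = j := Fin.ext hee
          rw [this]
        · exact (hanti (show (⟨(i : ℕ) + 1, h1'⟩ : Fin N) < j from hlt)).le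
      have hdi : 3 * ε ≤ d i := by
        have h := Finset.inf'_le d (Finset.mem_univ i)
        rw [hεdef]; linarith
      have hdeq : d i = lam i - lam ⟨(i : ℕ) + 1, h1'⟩ := by
        dsimp only [d]; rw [dif_pos h1']
      linarith [hdeq ▸ hdi]
    have hpick : ∀ e' : ℕ, ∀ i : Fin N,
        ∃ pe : ℝ × ℕ, e' ≤ pe.2 ∧ pe.1 ∈ T pe.2 ∧ |pe.1 - lam i| < ε := by
      intro e' i
      obtain ⟨e, he, x, hx, hxl⟩ := acc_near T (hlamA i) e' hε
      exact ⟨(x, e), he, hx, hxl⟩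
    choose pick hp1 hp2 hp3 using hpick
    let clamp : ℕ → Fin N := fun n => ⟨min n (N - 1), by omega⟩
    let g : ℕ → ℝ × ℕ := fun n =>
      Nat.rec (pick 0 (clamp 0)) (fun k ih => pick ih.2 (clamp (k + 1))) n
    have hg0 : g 0 = pick 0 (clamp 0) := rfl
    have hgs : ∀ n, g (n + 1) = pick (g n).2 (clamp (n + 1)) := fun n => rfl
    have hgmem : ∀ n, (g n).1 ∈ T (g n).2 := by
      intro n
      cases n with
      | zero => rw [hg0]; exact hp2 _ _
      | succ k => rw [hgs]; exact hp2 _ _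
    have hgnear : ∀ n, |(g n).1 - lam (clamp n)| < ε := by
      intro n
      cases n with
      | zero => rw [hg0]; exact hp3 _ _
      | succ k => rw [hgs]; exact hp3 _ _
    have hgmono : Monotone (fun n => (g n).2) := by
      apply monotone_nat_of_le_succ
      intro n
      rw [hgs]
      exact hp1 _ _
    have hclamp : ∀ i : Fin N, clamp (i : ℕ) = i := by
      intro i
      have := i.isLt
      exact Fin.ext (by simp only [clamp]; omega)
    refine hN ⟨fun i => (g (i : ℕ)).1, fun i => (g (i : ℕ)).2, ?_, ?_, ?_⟩
    · intro i j hij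
      have hi := hgnear (i : ℕ)
      have hj := hgnear (j : ℕ)
      rw [hclamp] at hi hj
      have hg' := hgap i j hij
      rw [abs_lt] at hi hj
      simp only
      linarith [hi.1, hi.2, hj.1, hj.2]
    · intro i j hij
      exact hgmono (show (i : ℕ) ≤ (j : ℕ) from hij)
    · intro n
      exact hgmem _
  refine ⟨hfin, ?_⟩
  intro l hl
  set f : ℝ → ℝ := fun x => Int.fract ((q : ℝ) * x) with hfdef
  have horb : ∀ n, f^[n] l ∈ famAccPts T := by
    intro n
    induction n with
    | zero => exact hl
    | succ n ih => rw [Function.iterate_succ_apply']; exact h2 _ ih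
  have hiter : ∀ n, f^[n + 1] l = Int.fract ((q : ℝ) ^ (n + 1) * l) := by
    intro n
    induction n with
    | zero => simp [hfdef]
    | succ n ih =>
      rw [Function.iterate_succ_apply', ih]
      show Int.fract ((q : ℝ) * Int.fract ((q : ℝ) ^ (n + 1) * l)) = _
      have hq' : (q : ℝ) * Int.fract ((q : ℝ) ^ (n + 1) * l)
          = (q : ℝ) ^ (n + 1 + 1) * l - (((q : ℤ) * ⌊(q : ℝ) ^ (n + 1) * l⌋ : ℤ) : ℝ) := by
        rw [Int.fract]
        push_cast
        ring
      rw [hq', Int.fract_sub_intCast]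
  haveI := hfin.to_subtype
  obtain ⟨m, n, hmn, he⟩ := Finite.exists_ne_map_eq_of_infinite
    (fun k : ℕ => (⟨f^[k] l, horb k⟩ : famAccPts T))
  have he' : f^[m] l = f^[n] l := congrArg Subtype.val he
  clear he
  wlog hlt : m < n generalizing m n
  · exact this n m hmn.symm he'.symm (by omega)
  have hq1 : (1 : ℝ) < (q : ℝ) := by exact_mod_cast hq.trans_lt' one_lt_two
  have hz : ∃ z : ℤ, ((q : ℝ) ^ n - (q : ℝ) ^ m) * l = z := by
    rcases Nat.eq_zero_or_pos m with rfl | hm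
    · have hn1 : n - 1 + 1 = n := by omega
      have h' := hiter (n - 1)
      rw [hn1] at h'
      have hll : l = Int.fract ((q : ℝ) ^ n * l) := by
        rw [← h', ← he']; rfl
      refine ⟨⌊(q : ℝ) ^ n * l⌋, ?_⟩
      have := Int.fract ((q : ℝ) ^ n * l)
      rw [pow_zero]
      have hfr : Int.fract ((q : ℝ) ^ n * l) = (q : ℝ) ^ n * l - ⌊(q : ℝ) ^ n * l⌋ := rfl
      rw [hfr] at hll
      linarith
    · have hm1 : m - 1 + 1 = m := by omega
      have hn1 : n - 1 + 1 = n := by omega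
      have h1' := hiter (m - 1)
      have h2' := hiter (n - 1)
      rw [hm1] at h1'
      rw [hn1] at h2'
      have : Int.fract ((q : ℝ) ^ m * l) = Int.fract ((q : ℝ) ^ n * l) := by
        rw [← h1', ← h2', he']
      obtain ⟨z, hz⟩ := Int.fract_eq_fract.mp this
      exact ⟨-z, by push_cast; linarith⟩
  obtain ⟨z, hz⟩ := hz
  have hne : (q : ℝ) ^ m < (q : ℝ) ^ n := pow_lt_pow_right₀ hq1 hlt
  have hd0 : ((q : ℝ) ^ n - (q : ℝ) ^ m) ≠ 0 := sub_ne_zero.mpr hne.ne'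
  refine ⟨(z : ℚ) / ((q : ℚ) ^ n - (q : ℚ) ^ m), ?_⟩
  have hd0' : ((q : ℚ) ^ n - (q : ℚ) ^ m) ≠ 0 := by
    intro h
    apply hd0
    exact_mod_cast congrArg (fun x : ℚ => (x : ℝ)) h
  push_cast
  rw [div_eq_iff (by exact_mod_cast hd0')]
  linarith
end

section
/- Let C be a (possibly noncommutative) ring, B a subring of C, Q a left C-module, T a subset of Q, and s ∈ C an element such that the commutator cs − sc lies in B for every c ∈ B. Let B⟨s⟩ denote the subring of C generated by B and s. Then the additive subgroup of Q generated by {x·t : x ∈ B⟨s⟩, t ∈ T} equals the additive subgroup of Q generated by {s^n·b·t : n ≥ 0, b ∈ B, t ∈ T}. -/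
/-!
Let `G` be the additive span of the products `s ^ n * b` (`b ∈ B`). The elements `x` with
`x * G ⊆ G` form a subring. It contains `s` trivially, and every `b ∈ B`, because
`b * s ^ (n + 1) = s * (b * s ^ n) + [b, s] * s ^ n` lets `b` move past powers of `s` at the cost
of terms in `G`. Hence `B⟨s⟩ * G ⊆ G`, and since `1 ∈ G` this gives `B⟨s⟩ = G`; acting on `T`
and taking additive spans yields the claim.
-/

open scoped Pointwise

def AddSubgroup.leftMultipliers {C : Type*} [Ring C] (G : AddSubgroup C) : Subring C where
  carrier := {x | ∀ y ∈ G, x * y ∈ G}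
  mul_mem' {x x'} hx hx' y hy := by rw [mul_assoc]; exact hx _ (hx' y hy)
  one_mem' y hy := by rwa [one_mul]
  add_mem' {x x'} hx hx' y hy := by rw [add_mul]; exact G.add_mem (hx y hy) (hx' y hy)
  zero_mem' y _ := by rw [zero_mul]; exact G.zero_mem
  neg_mem' {x} hx y hy := by rw [neg_mul]; exact G.neg_mem (hx y hy)

theorem AddSubgroup.mem_leftMultipliers_closure {C : Type*} [Ring C] {S : Set C} {x : C}
    (h : ∀ y ∈ S, x * y ∈ closure S) : x ∈ (closure S).leftMultipliers :=
  fun _ hy => (closure_le ((closure S).comap (AddMonoidHom.mulLeft x)) |>.2 h) hy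

theorem AddSubgroup.closure_smul_closure {C Q : Type*} [Ring C] [AddCommGroup Q] [Module C Q]
    (S : Set C) (T : Set Q) :
    closure ((closure S : Set C) • T) = closure (S • T) := by
  refine le_antisymm ?_ (closure_mono (Set.smul_subset_smul_right subset_closure))
  rw [closure_le]
  rintro _ ⟨x, hx, t, ht, rfl⟩
  have hS : closure S ≤ (closure (S • T)).comap ((smulAddHom C Q).flip t) :=
    closure_le _ |>.2 fun y hy => subset_closure (Set.smul_mem_smul hy ht)
  exact hS hx

namespace Subring

variable {C : Type*} [Ring C] (B : Subring C) (s : C)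

def powMulSpan : AddSubgroup C :=
  AddSubgroup.closure {x | ∃ n : ℕ, ∃ b ∈ B, x = s ^ n * b}

variable {B s}

theorem pow_mul_mem_powMulSpan (n : ℕ) {b : C} (hb : b ∈ B) : s ^ n * b ∈ B.powMulSpan s :=
  AddSubgroup.subset_closure ⟨n, b, hb, rfl⟩

theorem self_mem_leftMultipliers_powMulSpan : s ∈ (B.powMulSpan s).leftMultipliers :=
  AddSubgroup.mem_leftMultipliers_closure <| by
    rintro _ ⟨n, b, hb, rfl⟩
    rw [← mul_assoc, ← pow_succ']
    exact pow_mul_mem_powMulSpan _ hb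

theorem mul_mem_powMulSpan {x b : C} (hx : x ∈ B.powMulSpan s) (hb : b ∈ B) :
    x * b ∈ B.powMulSpan s := by
  have h : B.powMulSpan s ≤ (B.powMulSpan s).comap (AddMonoidHom.mulRight b) :=
    AddSubgroup.closure_le _ |>.2 <| by
      rintro _ ⟨n, b', hb', rfl⟩
      simpa only [SetLike.mem_coe, AddSubgroup.mem_comap, AddMonoidHom.coe_mulRight, mul_assoc]
        using pow_mul_mem_powMulSpan n (B.mul_mem hb' hb)
  exact h hx

theorem mul_pow_mem_powMulSpan (hs : ∀ c ∈ B, c * s - s * c ∈ B) (n : ℕ) :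
    ∀ b ∈ B, b * s ^ n ∈ B.powMulSpan s := by
  induction n with
  | zero => intro b hb; simpa using pow_mul_mem_powMulSpan 0 hb
  | succ n ih =>
    intro b hb
    have key : b * s ^ (n + 1) = s * (b * s ^ n) + (b * s - s * b) * s ^ n := by
      rw [pow_succ']; noncomm_ring
    rw [key]
    exact add_mem (self_mem_leftMultipliers_powMulSpan _ (ih b hb)) (ih _ (hs b hb))

theorem mem_leftMultipliers_powMulSpan (hs : ∀ c ∈ B, c * s - s * c ∈ B) {b : C}
    (hb : b ∈ B) : b ∈ (B.powMulSpan s).leftMultipliers :=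
  AddSubgroup.mem_leftMultipliers_closure <| by
    rintro _ ⟨n, b', hb', rfl⟩
    rw [← mul_assoc]
    exact mul_mem_powMulSpan (mul_pow_mem_powMulSpan hs n b hb) hb'

theorem coe_closure_union_singleton_eq_powMulSpan (hs : ∀ c ∈ B, c * s - s * c ∈ B) :
    (closure (↑B ∪ {s}) : Set C) = B.powMulSpan s := by
  apply subset_antisymm
  · have h : closure (↑B ∪ {s}) ≤ (B.powMulSpan s).leftMultipliers := by
      rw [closure_le]
      rintro x (hx | rfl)
      · exact mem_leftMultipliers_powMulSpan hs hx
      · exact self_mem_leftMultipliers_powMulSpan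
    intro x hx
    simpa using h hx 1 (by simpa using pow_mul_mem_powMulSpan (s := s) 0 B.one_mem)
  · have h : B.powMulSpan s ≤ (closure (↑B ∪ {s})).toAddSubgroup :=
      AddSubgroup.closure_le _ |>.2 <| by
        rintro _ ⟨n, b, hb, rfl⟩
        show s ^ n * b ∈ closure (↑B ∪ {s})
        have hs' : s ∈ closure (↑B ∪ {s}) := subset_closure (Set.mem_union_right _ rfl)
        exact mul_mem (pow_mem hs' n) (subset_closure (Set.mem_union_left _ hb))
    exact h

end Subring

theorem stmt_2 (C : Type*) [Ring C] (B : Subring C)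
    (Q : Type*) [AddCommGroup Q] [Module C Q] (T : Set Q) (s : C)
    (hs : ∀ c ∈ B, c * s - s * c ∈ B) :
    AddSubgroup.closure {y : Q | ∃ x ∈ Subring.closure (↑B ∪ {s}), ∃ t ∈ T, y = x • t}
      = AddSubgroup.closure {y : Q | ∃ (n : ℕ), ∃ b ∈ B, ∃ t ∈ T, y = s ^ n • b • t} := by
  have hL : {y : Q | ∃ x ∈ Subring.closure (↑B ∪ {s}), ∃ t ∈ T, y = x • t}
      = (B.powMulSpan s : Set C) • T := by
    rw [← Subring.coe_closure_union_singleton_eq_powMulSpan hs]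
    ext y; simp [Set.mem_smul, eq_comm]
  have hR : {y : Q | ∃ (n : ℕ), ∃ b ∈ B, ∃ t ∈ T, y = s ^ n • b • t}
      = {x | ∃ n : ℕ, ∃ b ∈ B, x = s ^ n * b} • T := by
    ext y; simp [Set.mem_smul, mul_smul, eq_comm]
  rw [hL, hR, Subring.powMulSpan, AddSubgroup.closure_smul_closure]
end

section
/- Let k be a perfect field of characteristic p > 0, let R = k[x_1, …, x_m] be a polynomial ring, let q = p^γ be a power of p, and let l ≥ 1. If N ⊆ R^{⊕l} is an R-submodule generated by finitely many vectors each of whose entries has total degree at most d, then for every e ≥ 1 the submodule N^{[1/q^e]} is generated by finitely many vectors each of whose entries has total degree at most ⌊d/q^e⌋. -/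
/-- The `Q`-th bracket power of a submodule `N ⊆ R^{⊕l}`: the submodule generated by
the entrywise `Q`-th powers of elements of `N`. -/
def brkPow {R : Type*} [CommRing R] {l : ℕ} (Q : ℕ) (N : Submodule R (Fin l → R)) :
    Submodule R (Fin l → R) :=
  Submodule.span R ((fun u : Fin l → R => fun j' => u j' ^ Q) '' ↑N)

/-- `N^{[1/Q]}`: the intersection of all submodules `N'` with `N ⊆ N'^{[Q]}`. -/
def invBrkPow {R : Type*} [CommRing R] {l : ℕ} (Q : ℕ) (N : Submodule R (Fin l → R)) :
    Submodule R (Fin l → R) :=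
  sInf {N' : Submodule R (Fin l → R) | N ≤ brkPow Q N'}

/-!
Write `Q = p ^ E`. Since `k` is perfect, every `f ∈ k[x]` decomposes uniquely as
`f = ∑_α x^α f_α ^ Q` with `0 ≤ α < Q` componentwise: `f_α` collects the monomials `x^(Q c + α)`
of `f` and replaces each by `x^c` times the `Q`-th root of its coefficient. The map `f ↦ f_α` is
additive, satisfies `(f g^Q)_α = f_α g`, and has `deg f_α ≤ deg f / Q`.

For `N = ⟨v_i⟩` this gives `N^{[1/Q]} = ⟨(v_i)_α⟩`: the decomposition `v_i = ∑_α x^α (v_i)_α^{[Q]}`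
puts `N` inside `⟨(v_i)_α⟩^{[Q]}`, and conversely `x ↦ x_α` maps `N'^{[Q]}` into `N'`, because it
sends `r u^{[Q]}` to `r_α u`. The degree bound for the generators `(v_i)_α` is then immediate.
-/

open MvPolynomial Submodule

namespace Finsupp

variable {σ : Type*}

noncomputable def modNat (b : σ →₀ ℕ) (Q : ℕ) : σ →₀ ℕ :=
  b.mapRange (· % Q) (Nat.zero_mod Q)

lemma smul_floorDiv_add_modNat (b : σ →₀ ℕ) (Q : ℕ) : Q • (b ⌊/⌋ Q) + b.modNat Q = b := by
  ext i
  simp [modNat, Nat.div_add_mod]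

lemma modNat_add_smul (b c : σ →₀ ℕ) (Q : ℕ) : (b + Q • c).modNat Q = b.modNat Q := by
  ext i
  simp [modNat]

lemma add_smul_floorDiv {Q : ℕ} (hQ : 0 < Q) (b c : σ →₀ ℕ) :
    (b + Q • c) ⌊/⌋ Q = b ⌊/⌋ Q + c := by
  ext i
  simp [Nat.add_mul_div_left _ _ hQ]

lemma degree_floorDiv_mul_le (b : σ →₀ ℕ) (Q : ℕ) : (b ⌊/⌋ Q).degree * Q ≤ b.degree := by
  rcases Q.eq_zero_or_pos with rfl | hQ
  · simp
  rw [mul_comm, ← smul_eq_mul, ← map_nsmul]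
  exact degree_mono (smul_floorDiv_le hQ)

end Finsupp

section IterateFrobenius

variable {k : Type*} [CommSemiring k] {p : ℕ} [ExpChar k p] [PerfectRing k p]

lemma iterateFrobeniusEquiv_symm_pow_p_pow (E : ℕ) (a : k) :
    (iterateFrobeniusEquiv k p E).symm a ^ p ^ E = a :=
  (iterateFrobeniusEquiv k p E).apply_symm_apply a

lemma iterateFrobeniusEquiv_symm_pow (E : ℕ) (a : k) :
    (iterateFrobeniusEquiv k p E).symm (a ^ p ^ E) = a :=
  (iterateFrobeniusEquiv k p E).symm_apply_apply a

end IterateFrobenius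

namespace MvPolynomial

variable {σ k : Type*} [CommSemiring k] (p : ℕ) [ExpChar k p] [PerfectRing k p]

open Classical in
/-- The coefficient `f_α` of `x^α` in `f = ∑_{α < p^E} x^α f_α ^ p^E`. -/
noncomputable def frobeniusComponent (E : ℕ) (α : σ →₀ ℕ) :
    MvPolynomial σ k →+ MvPolynomial σ k :=
  (Finsupp.liftAddHom fun b =>
    if b.modNat (p ^ E) = α then
      (monomial (b ⌊/⌋ p ^ E)).toAddMonoidHom.comp
        (iterateFrobeniusEquiv k p E).symm.toAddMonoidHom
    else 0).comp AddMonoidAlgebra.coeffAddEquiv.toAddMonoidHom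

variable {p}

lemma frobeniusComponent_monomial_of_modNat_eq {E : ℕ} {α b : σ →₀ ℕ}
    (h : b.modNat (p ^ E) = α) (a : k) :
    frobeniusComponent p E α (monomial b a) =
      monomial (b ⌊/⌋ p ^ E) ((iterateFrobeniusEquiv k p E).symm a) := by
  simp [frobeniusComponent, h]

lemma frobeniusComponent_monomial_of_modNat_ne {E : ℕ} {α b : σ →₀ ℕ}
    (h : b.modNat (p ^ E) ≠ α) (a : k) :
    frobeniusComponent p E α (monomial b a) = 0 := by
  simp [frobeniusComponent, h]

lemma monomial_mul_frobeniusComponent_monomial_pow {E : ℕ} {α b : σ →₀ ℕ}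
    (h : b.modNat (p ^ E) = α) (a : k) :
    monomial α 1 * frobeniusComponent p E α (monomial b a) ^ p ^ E = monomial b a := by
  rw [frobeniusComponent_monomial_of_modNat_eq h, monomial_pow, monomial_mul,
    iterateFrobeniusEquiv_symm_pow_p_pow, one_mul, ← h, add_comm,
    Finsupp.smul_floorDiv_add_modNat]

theorem sum_monomial_mul_frobeniusComponent_pow (E : ℕ) (f : MvPolynomial σ k)
    {T : Finset (σ →₀ ℕ)} (hT : ∀ b ∈ f.support, b.modNat (p ^ E) ∈ T) :
    ∑ α ∈ T, monomial α 1 * frobeniusComponent p E α f ^ p ^ E = f := by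
  classical
  calc ∑ α ∈ T, monomial α 1 * frobeniusComponent p E α f ^ p ^ E
      = ∑ α ∈ T, ∑ b ∈ f.support,
          monomial α 1 * frobeniusComponent p E α (monomial b (coeff b f)) ^ p ^ E := by
        refine Finset.sum_congr rfl fun α _ => ?_
        conv_lhs => rw [f.as_sum, map_sum, sum_pow_char_pow, Finset.mul_sum]
    _ = ∑ b ∈ f.support, ∑ α ∈ T,
          if b.modNat (p ^ E) = α then monomial b (coeff b f) else 0 := by
        rw [Finset.sum_comm]
        refine Finset.sum_congr rfl fun b _ => Finset.sum_congr rfl fun α _ => ?_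
        split_ifs with h
        · exact monomial_mul_frobeniusComponent_monomial_pow h _
        · rw [frobeniusComponent_monomial_of_modNat_ne h, zero_pow (expChar_pow_pos k p E).ne',
            mul_zero]
    _ = f := by
        rw [Finset.sum_congr rfl fun b hb => by rw [Finset.sum_ite_eq, if_pos (hT b hb)]]
        exact f.as_sum.symm

theorem frobeniusComponent_mul_pow (E : ℕ) (α : σ →₀ ℕ) (f g : MvPolynomial σ k) :
    frobeniusComponent p E α (f * g ^ p ^ E) = frobeniusComponent p E α f * g := by
  induction f using MvPolynomial.induction_on' with
  | add f₁ f₂ ih₁ ih₂ => rw [add_mul, map_add, ih₁, ih₂, map_add, add_mul]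
  | monomial b a =>
    induction g using MvPolynomial.induction_on' with
    | add g₁ g₂ ih₁ ih₂ => rw [add_pow_expChar_pow, mul_add, map_add, ih₁, ih₂, mul_add]
    | monomial c a' =>
      rw [monomial_pow, monomial_mul]
      by_cases h : b.modNat (p ^ E) = α
      · rw [frobeniusComponent_monomial_of_modNat_eq ((b.modNat_add_smul c _).trans h),
          frobeniusComponent_monomial_of_modNat_eq h, monomial_mul,
          Finsupp.add_smul_floorDiv (expChar_pow_pos k p E), map_mul,
          iterateFrobeniusEquiv_symm_pow]
      · rw [frobeniusComponent_monomial_of_modNat_ne ((b.modNat_add_smul c _).trans_ne h),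
          frobeniusComponent_monomial_of_modNat_ne h, zero_mul]

theorem totalDegree_frobeniusComponent_le (E : ℕ) (α : σ →₀ ℕ) (f : MvPolynomial σ k) :
    (frobeniusComponent p E α f).totalDegree ≤ f.totalDegree / p ^ E := by
  conv_lhs => rw [f.as_sum, map_sum]
  refine (totalDegree_finsetSum _ _).trans (Finset.sup_le fun b hb => ?_)
  by_cases h : b.modNat (p ^ E) = α
  · rw [frobeniusComponent_monomial_of_modNat_eq h,
      Nat.le_div_iff_mul_le (expChar_pow_pos k p E)]
    calc (monomial (b ⌊/⌋ p ^ E) _).totalDegree * p ^ E ≤ (b ⌊/⌋ p ^ E).degree * p ^ E :=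
          Nat.mul_le_mul_right _ (totalDegree_monomial_le _ _)
      _ ≤ b.degree := b.degree_floorDiv_mul_le _
      _ ≤ f.totalDegree := le_totalDegree hb
  · simp [frobeniusComponent_monomial_of_modNat_ne h]

end MvPolynomial

section BracketPower

variable {σ k : Type*} [CommRing k] {p : ℕ} [ExpChar k p] [PerfectRing k p] {l : ℕ}

theorem frobeniusComponent_comp_mem_of_mem_brkPow {E : ℕ}
    {N : Submodule (MvPolynomial σ k) (Fin l → MvPolynomial σ k)}
    {x : Fin l → MvPolynomial σ k} (hx : x ∈ brkPow (p ^ E) N) (α : σ →₀ ℕ) :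
    frobeniusComponent p E α ∘ x ∈ N := by
  suffices ∀ r : MvPolynomial σ k, frobeniusComponent p E α ∘ (r • x) ∈ N by
    simpa using this 1
  induction hx using span_induction with
  | mem y hy =>
    obtain ⟨u, hu, rfl⟩ := hy
    intro r
    convert N.smul_mem (frobeniusComponent p E α r) hu using 1
    funext j
    exact frobeniusComponent_mul_pow (p := p) E α r (u j)
  | zero => simp
  | add x y _ _ hx hy =>
    intro r
    convert N.add_mem (hx r) (hy r) using 1
    funext j
    simp
  | smul s x _ hx =>
    intro r
    simpa [smul_smul] using hx (r * s)

theorem mem_brkPow_of_forall_frobeniusComponent_comp_mem {E : ℕ}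
    {v : Fin l → MvPolynomial σ k}
    {T : Finset (σ →₀ ℕ)} (hT : ∀ j, ∀ b ∈ (v j).support, b.modNat (p ^ E) ∈ T)
    {N : Submodule (MvPolynomial σ k) (Fin l → MvPolynomial σ k)}
    (hN : ∀ α ∈ T, frobeniusComponent p E α ∘ v ∈ N) :
    v ∈ brkPow (p ^ E) N := by
  have hv : v = ∑ α ∈ T,
      monomial α (1 : k) • fun j => frobeniusComponent p E α (v j) ^ p ^ E := by
    funext j
    simp only [Finset.sum_apply, Pi.smul_apply, smul_eq_mul]
    exact (sum_monomial_mul_frobeniusComponent_pow E (v j) (hT j)).symm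
  rw [hv]
  exact sum_mem fun α hα => smul_mem _ _ <| subset_span <| Set.mem_image_of_mem _ (hN α hα)

theorem invBrkPow_span_eq_span_frobeniusComponent {ι : Type*} (E : ℕ)
    (v : ι → Fin l → MvPolynomial σ k) {T : Finset (σ →₀ ℕ)}
    (hT : ∀ i j, ∀ b ∈ (v i j).support, b.modNat (p ^ E) ∈ T) :
    invBrkPow (p ^ E) (span (MvPolynomial σ k) (Set.range v)) =
      span (MvPolynomial σ k)
        (Set.range fun t : ι × T => frobeniusComponent p E t.2 ∘ v t.1) := by
  refine le_antisymm (sInf_le <| span_le.mpr ?_) (le_sInf fun N hN => span_le.mpr ?_)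
  · rintro _ ⟨i, rfl⟩
    exact mem_brkPow_of_forall_frobeniusComponent_comp_mem (hT i) fun α hα =>
      subset_span ⟨(i, ⟨α, hα⟩), rfl⟩
  · rintro _ ⟨⟨i, α⟩, rfl⟩
    exact frobeniusComponent_comp_mem_of_mem_brkPow (hN (subset_span ⟨i, rfl⟩)) α

end BracketPower

theorem stmt_6_general (k : Type*) [Field k] (p : ℕ)
    [ExpChar k p] [PerfectRing k p]
    (m : ℕ) (γ : ℕ) (q : ℕ) (hq : q = p ^ γ)
    (l : ℕ) (d : ℕ) (n : ℕ)
    (v : Fin n → Fin l → MvPolynomial (Fin m) k)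
    (hv : ∀ i j, (v i j).totalDegree ≤ d)
    (e : ℕ) :
    ∃ (n' : ℕ) (w : Fin n' → Fin l → MvPolynomial (Fin m) k),
      (∀ i j, (w i j).totalDegree ≤ d / q ^ e) ∧
      invBrkPow (q ^ e) (Submodule.span (MvPolynomial (Fin m) k) (Set.range v))
        = Submodule.span (MvPolynomial (Fin m) k) (Set.range w) := by
  subst hq
  rw [← pow_mul]
  let T := (Finset.univ.biUnion fun ij : Fin n × Fin l => (v ij.1 ij.2).support).image
    (·.modNat (p ^ (γ * e)))
  have hT : ∀ i j, ∀ b ∈ (v i j).support, b.modNat (p ^ (γ * e)) ∈ T := fun i j b hb =>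
    Finset.mem_image_of_mem _ (Finset.mem_biUnion.mpr ⟨(i, j), Finset.mem_univ _, hb⟩)
  let enum := (Fintype.equivFin (Fin n × T)).symm
  refine ⟨Fintype.card (Fin n × T),
    fun t => frobeniusComponent p (γ * e) (enum t).2 ∘ v (enum t).1, fun t j => ?_, ?_⟩
  · exact (totalDegree_frobeniusComponent_le _ _ _).trans (Nat.div_le_div_right (hv _ j))
  · rw [invBrkPow_span_eq_span_frobeniusComponent _ v hT, ← enum.surjective.range_comp]
    rfl

theorem stmt_6 (k : Type*) [Field k] (p : ℕ) [Fact p.Prime] [CharP k p]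
    [ExpChar k p] [PerfectRing k p]
    (m : ℕ) (γ : ℕ) (hγ : 1 ≤ γ) (q : ℕ) (hq : q = p ^ γ)
    (l : ℕ) (hl : 1 ≤ l) (d : ℕ) (n : ℕ)
    (v : Fin n → Fin l → MvPolynomial (Fin m) k)
    (hv : ∀ i j, (v i j).totalDegree ≤ d)
    (e : ℕ) (he : 1 ≤ e) :
    ∃ (n' : ℕ) (w : Fin n' → Fin l → MvPolynomial (Fin m) k),
      (∀ i j, (w i j).totalDegree ≤ d / q ^ e) ∧
      invBrkPow (q ^ e) (Submodule.span (MvPolynomial (Fin m) k) (Set.range v))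
        = Submodule.span (MvPolynomial (Fin m) k) (Set.range w) :=
  stmt_6_general k p m γ q hq l d n v hv e
end

section
/- Let k be a perfect field of characteristic p > 0 and R a commutative Noetherian k-algebra that is essentially of finite type over k, formally smooth over k, and F-finite. Let q = p^γ, let f ∈ R, and consider the list r_j = f^{q−1−j} for 0 ≤ j ≤ q−1. Then for every λ ∈ (0,1] and every e ≥ 0 one has I(r,λ,e) = ((f^{q^{e+1} − ⌈λ q^{e+1}⌉}))^{[1/q^{e+1}]}, and moreover I(r,λ,e) = τ(r,λ,e). -/
noncomputable section

/-- The `Q`-th bracket power of an ideal: the ideal generated by `Q`-th powers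
of its elements. -/
def idealBrk {R : Type*} [CommRing R] (Q : ℕ) (I : Ideal R) : Ideal R :=
  Ideal.span ((fun f => f ^ Q) '' ↑I)

/-- `I^{[1/Q]}`: the intersection of all ideals `J` with `I ⊆ J^{[Q]}`. -/
def idealInvBrk {R : Type*} [CommRing R] (Q : ℕ) (I : Ideal R) : Ideal R :=
  sInf {J : Ideal R | I ≤ idealBrk Q J}

/-- For `c` with base-`q` digits `c = i_0 + i_1 q + ⋯ + i_e q^e`, the product
`r_{i_0} · r_{i_1}^q ⋯ r_{i_e}^{q^e}`. -/
def listProd {R : Type*} [CommRing R] (q : ℕ) (r : ℕ → R) (c e : ℕ) : R :=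
  ∏ j ∈ Finset.range (e + 1), r (c / q ^ j % q) ^ q ^ j

/-- The ideal `I(r_0,…,r_{q-1}, λ, e)`. -/
def listI {R : Type*} [CommRing R] (q : ℕ) (r : ℕ → R) (lam : ℝ) (e : ℕ) : Ideal R :=
  idealInvBrk (q ^ (e + 1))
    (Ideal.span {listProd q r (⌈lam * (q : ℝ) ^ (e + 1)⌉ - 1).toNat e})

/-- The simple list test ideal `τ(r_0,…,r_{q-1}, λ, e) = Σ_{0 < λ' ≤ λ} I(r, λ', e)`. -/
def listTau {R : Type*} [CommRing R] (q : ℕ) (r : ℕ → R) (lam : ℝ) (e : ℕ) : Ideal R :=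
  ⨆ lam' ∈ Set.Ioc (0 : ℝ) lam, listI q r lam' e

/-- The jumping set `S_e`. -/
def listS {R : Type*} [CommRing R] (q : ℕ) (r : ℕ → R) (e : ℕ) : Set ℝ :=
  {lam | lam ∈ Set.Ioo (0 : ℝ) 1 ∧
    ∀ lam' ∈ Set.Ioc lam (1 : ℝ), listTau q r lam' e ≠ listTau q r lam e}

/-- `λ` is a jumping number for the list `r_0,…,r_{q-1}`: a nonzero accumulation point
of the family of sets `{S_e}`. -/
def IsJumpingNumber {R : Type*} [CommRing R] (q : ℕ) (r : ℕ → R) (lam : ℝ) : Prop :=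
  lam ≠ 0 ∧ lam ∈ ⋂ e' : ℕ, closure (⋃ e ∈ Set.Ici e', listS q r e)

/-- `λ` is an extended jumping number: some integer translate of `λ` is a jumping number. -/
def IsExtJumpingNumber {R : Type*} [CommRing R] (q : ℕ) (r : ℕ → R) (lam : ℝ) : Prop :=
  ∃ n : ℤ, IsJumpingNumber q r (lam - n)

end

-- auxiliary lemmas

lemma digits_sum (q : ℕ) : ∀ (n : ℕ) (c : ℕ),
    ∑ j ∈ Finset.range n, (c / q ^ j % q) * q ^ j = c % q ^ n := by
  intro n
  induction n with
  | zero => intro c; simp [Nat.mod_one]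
  | succ n ih =>
    intro c
    rw [Finset.sum_range_succ, ih, pow_succ, Nat.mod_mul]
    ring

lemma geom_nat (q : ℕ) (hq : 1 ≤ q) (n : ℕ) :
    ∑ j ∈ Finset.range n, (q - 1) * q ^ j = q ^ n - 1 := by
  induction n with
  | zero => simp
  | succ n ih =>
    rw [Finset.sum_range_succ, ih, pow_succ, mul_comm (q ^ n) q, Nat.sub_one_mul]
    have h1 : 1 ≤ q ^ n := Nat.one_le_pow _ _ (by omega)
    have h2 : q ^ n ≤ q * q ^ n := Nat.le_mul_of_pos_left _ (by omega)
    omega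

lemma invBrk_mono {R : Type*} [CommRing R] (Q : ℕ) {I I' : Ideal R} (h : I ≤ I') :
    idealInvBrk Q I ≤ idealInvBrk Q I' := by
  apply sInf_le_sInf
  intro J hJ
  exact le_trans h hJ

lemma listI_eq {R : Type*} [CommRing R] (q : ℕ) (hq2 : 2 ≤ q) (f : R) (r : ℕ → R)
    (hr : ∀ j < q, r j = f ^ (q - 1 - j)) (lam : ℝ) (hlam : lam ∈ Set.Ioc (0:ℝ) 1) (e : ℕ) :
    listI q r lam e = idealInvBrk (q ^ (e+1))
      (Ideal.span {f ^ (q ^ (e+1) - (⌈lam * (q:ℝ) ^ (e+1)⌉).toNat)}) := by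
  have hN0 : (0:ℝ) < (q:ℝ) ^ (e+1) := by positivity
  have hA1 : 1 ≤ ⌈lam * (q:ℝ) ^ (e+1)⌉ := by
    have : (0:ℝ) < lam * (q:ℝ) ^ (e+1) := mul_pos hlam.1 hN0
    exact Int.ceil_pos.mpr this
  have hAN : ⌈lam * (q:ℝ) ^ (e+1)⌉ ≤ (q:ℤ) ^ (e+1) := by
    rw [Int.ceil_le]
    push_cast
    calc lam * (q:ℝ)^(e+1) ≤ 1 * (q:ℝ)^(e+1) := by
          apply mul_le_mul_of_nonneg_right hlam.2 hN0.le
      _ = (q:ℝ)^(e+1) := one_mul _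
  set A : ℤ := ⌈lam * (q:ℝ) ^ (e+1)⌉ with hA
  set a : ℕ := A.toNat with ha
  have haA : (a : ℤ) = A := Int.toNat_of_nonneg (by omega)
  have ha1 : 1 ≤ a := by omega
  have haN : a ≤ q ^ (e+1) := by
    have : (a : ℤ) ≤ ((q:ℤ)) ^ (e+1) := by omega
    exact_mod_cast this
  have hc : (A - 1).toNat = a - 1 := by omega
  have hclt : a - 1 < q ^ (e+1) := by
    have := Nat.one_le_pow (e+1) q (by omega)
    omega
  -- compute listProd
  have key : listProd q r (a - 1) e = f ^ (q ^ (e+1) - a) := by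
    unfold listProd
    have hdig : ∀ j ∈ Finset.range (e+1),
        r ((a-1) / q ^ j % q) ^ q ^ j = f ^ ((q - 1 - ((a-1) / q ^ j % q)) * q ^ j) := by
      intro j _
      rw [hr _ (Nat.mod_lt _ (by omega)), ← pow_mul]
    rw [Finset.prod_congr rfl hdig, Finset.prod_pow_eq_pow_sum]
    congr 1
    have hsum : ∑ j ∈ Finset.range (e+1), (q - 1 - ((a-1) / q ^ j % q)) * q ^ j
        + ∑ j ∈ Finset.range (e+1), ((a-1) / q ^ j % q) * q ^ j
        = ∑ j ∈ Finset.range (e+1), (q - 1) * q ^ j := by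
      rw [← Finset.sum_add_distrib]
      apply Finset.sum_congr rfl
      intro j _
      have : (a-1) / q ^ j % q < q := Nat.mod_lt _ (by omega)
      rw [← Nat.add_mul]
      congr 1
      omega
    rw [digits_sum, Nat.mod_eq_of_lt hclt, geom_nat q (by omega)] at hsum
    omega
  unfold listI
  rw [hc, key]

universe u

theorem stmt_9 (k R : Type u) [Field k] (p : ℕ) [Fact p.Prime] [CharP k p]
    [ExpChar k p] [PerfectRing k p]
    [CommRing R] [IsNoetherianRing R] [Algebra k R]
    [Algebra.EssFiniteType k R] [Algebra.FormallySmooth k R]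
    [CharP R p] [ExpChar R p] (hF : (frobenius R p).Finite)
    (γ : ℕ) (hγ : 1 ≤ γ) (q : ℕ) (hq : q = p ^ γ)
    (f : R) (r : ℕ → R) (hr : ∀ j < q, r j = f ^ (q - 1 - j))
    (lam : ℝ) (hlam : lam ∈ Set.Ioc (0 : ℝ) 1) (e : ℕ) :
    listI q r lam e =
        idealInvBrk (q ^ (e + 1))
          (Ideal.span {f ^ (q ^ (e + 1) - (⌈lam * (q : ℝ) ^ (e + 1)⌉).toNat)}) ∧
      listI q r lam e = listTau q r lam e := by
  have hq2 : 2 ≤ q := by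
    have h2p := (Fact.out : p.Prime).two_le
    subst hq
    calc 2 ≤ p := h2p
      _ ≤ p ^ γ := Nat.le_self_pow (by omega) p
  have h1 := listI_eq q hq2 f r hr lam hlam e
  refine ⟨h1, le_antisymm ?_ ?_⟩
  · exact le_iSup₂ (f := fun (lam' : ℝ) (_ : lam' ∈ Set.Ioc (0:ℝ) lam) => listI q r lam' e)
      lam ⟨hlam.1, le_refl _⟩
  · apply iSup₂_le
    intro lam' hlam'
    have hlam'1 : lam' ∈ Set.Ioc (0:ℝ) 1 := ⟨hlam'.1, le_trans hlam'.2 hlam.2⟩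
    rw [h1, listI_eq q hq2 f r hr lam' hlam'1 e]
    apply invBrk_mono
    rw [Ideal.span_singleton_le_span_singleton]
    apply pow_dvd_pow
    have hceil : ⌈lam' * (q:ℝ) ^ (e+1)⌉ ≤ ⌈lam * (q:ℝ) ^ (e+1)⌉ := by
      apply Int.ceil_le_ceil
      apply mul_le_mul_of_nonneg_right hlam'.2 (by positivity)
    have := Int.toNat_le_toNat hceil
    omega
end

section
/- Let R be a nonzero reduced commutative ring of prime characteristic p > 0, let q be a power of p, and let e ≥ 1 be such that R, regarded as a module over itself via the q^e-power Frobenius action r · x := r^{q^e} x, is finite free. Let l ≥ 1, and let D^e denote the set of additive endomorphisms φ of R satisfying φ(a^{q^e} b) = a^{q^e} φ(b) for all a, b ∈ R, acting on R^{⊕l} diagonally (the same φ applied to every coordinate). Then: (1) an additive subgroup V ⊆ R^{⊕l} is stable under the diagonal action of every element of D^e if and only if V = N^{[q^e]} for some R-submodule N ⊆ R^{⊕l}; and (2) for every R-submodule N ⊆ R^{⊕l}, the smallest additive subgroup of R^{⊕l} containing N and stable under every element of D^e equals (N^{[1/q^e]})^{[q^e]}. -/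
/-- An additive endomorphism `φ` of `R` is `Q`-linear if `φ(a^Q b) = a^Q φ(b)`
for all `a b : R`. -/
def IsQLinear {R : Type*} [CommRing R] (Q : ℕ) (φ : R →+ R) : Prop :=
  ∀ a b : R, φ (a ^ Q * b) = a ^ Q * φ b

/-- An additive subgroup `V ⊆ R^{⊕l}` is stable under the diagonal action of every
`Q`-linear additive endomorphism of `R`. -/
def DStable {R : Type*} [CommRing R] {l : ℕ} (Q : ℕ) (V : AddSubgroup (Fin l → R)) : Prop :=
  ∀ φ : R →+ R, IsQLinear Q φ → ∀ v ∈ V, (fun i => φ (v i)) ∈ V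

theorem stmt_16 {R : Type*} [CommRing R] [Nontrivial R] [IsReduced R]
    (p : ℕ) [Fact p.Prime] [CharP R p]
    (q : ℕ) (hq : ∃ γ : ℕ, 1 ≤ γ ∧ q = p ^ γ) (e : ℕ) (he : 1 ≤ e)
    (c : ℕ) (b : Fin c → R)
    -- `R` is finite free, with basis `b`, as a module over itself via `r · x = r^{q^e} x`:
    (hgen : ∀ x : R, ∃ a : Fin c → R, x = ∑ j, a j ^ q ^ e * b j)
    (huniq : ∀ a a' : Fin c → R,
      (∑ j, a j ^ q ^ e * b j) = (∑ j, a' j ^ q ^ e * b j) → ∀ j, a j ^ q ^ e = a' j ^ q ^ e)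
    (l : ℕ) (hl : 1 ≤ l) :
    (∀ V : AddSubgroup (Fin l → R),
      DStable (q ^ e) V ↔
        ∃ N : Submodule R (Fin l → R), V = (brkPow (q ^ e) N).toAddSubgroup) ∧
    ∀ N : Submodule R (Fin l → R),
      sInf {V : AddSubgroup (Fin l → R) | (N : Set (Fin l → R)) ⊆ ↑V ∧ DStable (q ^ e) V} =
        (brkPow (q ^ e) (invBrkPow (q ^ e) N)).toAddSubgroup := by
  classical
  obtain ⟨γ, hγ, rfl⟩ := hq
  set Q : ℕ := (p ^ γ) ^ e with hQdef
  have hQm : Q = p ^ (γ * e) := by rw [hQdef, ← pow_mul]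
  have hQpos : 0 < Q := by
    rw [hQm]; exact pow_pos (Nat.Prime.pos Fact.out) _
  have frob_add : ∀ x y : R, (x + y) ^ Q = x ^ Q + y ^ Q := fun x y => by
    rw [hQm]; exact add_pow_char_pow x y p (γ * e)
  have frob_inj : ∀ x y : R, x ^ Q = y ^ Q → x = y := by
    intro x y h
    have h0 : (x - y) ^ Q = 0 := by
      rw [hQm, sub_pow_char_pow x y (γ * e), ← hQm, h, sub_self]
    exact sub_eq_zero.mp (IsNilpotent.eq_zero ⟨Q, h0⟩)
  choose A hA using hgen
  have coefdet : ∀ (x : R) (a : Fin c → R), x = ∑ j, a j ^ Q * b j → ∀ j, A x j = a j := by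
    intro x a h j
    exact frob_inj _ _ (huniq (A x) a (by rw [← hA x, ← h]) j)
  have A_add : ∀ (x y : R) (j), A (x + y) j = A x j + A y j := by
    intro x y j
    refine coefdet _ (fun j => A x j + A y j) ?_ j
    calc x + y = (∑ j, A x j ^ Q * b j) + ∑ j, A y j ^ Q * b j := by rw [← hA, ← hA]
      _ = ∑ j, (A x j + A y j) ^ Q * b j := by
          rw [← Finset.sum_add_distrib]
          exact Finset.sum_congr rfl fun j _ => by rw [frob_add, add_mul]
  have A_smul : ∀ (r x : R) (j), A (r ^ Q * x) j = r * A x j := by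
    intro r x j
    refine coefdet _ (fun j => r * A x j) ?_ j
    calc r ^ Q * x = r ^ Q * ∑ j, A x j ^ Q * b j := by rw [← hA]
      _ = ∑ j, (r * A x j) ^ Q * b j := by
          rw [Finset.mul_sum]
          exact Finset.sum_congr rfl fun j _ => by rw [mul_pow, mul_assoc]
  have A_zero : ∀ j, A 0 j = 0 := by
    intro j
    refine coefdet _ (fun _ => 0) ?_ j
    simp [zero_pow hQpos.ne']
  set ψ : Fin c → (R →+ R) :=
    fun j => AddMonoidHom.mk' (fun x => A x j) (fun x y => A_add x y j) with hψ
  have A_sum : ∀ {ι : Type} (s : Finset ι) (f : ι → R) (j : Fin c),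
      A (∑ x ∈ s, f x) j = ∑ x ∈ s, A (f x) j := by
    intro ι s f j
    exact map_sum (ψ j) f s
  -- decomposition of a vector
  have decomp : ∀ v : Fin l → R, v = ∑ j, b j • (fun i => A (v i) j ^ Q) := by
    intro v; funext i
    rw [Finset.sum_apply]
    simp only [Pi.smul_apply, smul_eq_mul]
    calc v i = ∑ j, A (v i) j ^ Q * b j := hA (v i)
      _ = ∑ j, b j * A (v i) j ^ Q := by
          exact Finset.sum_congr rfl fun j _ => mul_comm _ _
  -- key membership criterion for bracket powers
  have mem_brk : ∀ (M : Submodule R (Fin l → R)) (v : Fin l → R),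
      v ∈ brkPow Q M ↔ ∀ j, (fun i => A (v i) j) ∈ M := by
    intro M v
    constructor
    · intro hv
      have key : ∀ (w : Fin l → R), w ∈ brkPow Q M → ∀ (r : R) (j : Fin c),
          (fun i => A (r * w i) j) ∈ M := by
        intro w hw
        induction hw using Submodule.span_induction with
        | mem x hx =>
            obtain ⟨u, hu, rfl⟩ := hx
            intro r j
            show (fun i => A (r * u i ^ Q) j) ∈ M
            have h1 : (fun i => A (r * u i ^ Q) j) = A r j • u := by
              funext i
              rw [mul_comm r, A_smul, mul_comm]
              rfl
            rw [h1]; exact M.smul_mem _ hu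
        | zero =>
            intro r j
            have h1 : (fun i => A (r * (0 : Fin l → R) i) j) = 0 := by
              funext i; simp [A_zero]
            show (fun i => A (r * (0 : Fin l → R) i) j) ∈ M
            rw [h1]; exact M.zero_mem
        | add x y hx hy ihx ihy =>
            intro r j
            have h1 : (fun i => A (r * (x + y) i) j)
                = (fun i => A (r * x i) j) + fun i => A (r * y i) j := by
              funext i
              simp only [Pi.add_apply, mul_add, A_add]
            show (fun i => A (r * (x + y) i) j) ∈ M
            rw [h1]; exact M.add_mem (ihx r j) (ihy r j)
        | smul s x hx ih =>
            intro r j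
            have h1 : (fun i => A (r * (s • x) i) j) = fun i => A ((r * s) * x i) j := by
              funext i; rw [Pi.smul_apply, smul_eq_mul, ← mul_assoc]
            show (fun i => A (r * (s • x) i) j) ∈ M
            rw [h1]; exact ih (r * s) j
      intro j
      have h2 := key v hv 1 j
      simpa using h2
    · intro h
      have hv : (∑ j, b j • (fun i => A (v i) j ^ Q)) ∈ brkPow Q M := by
        refine Submodule.sum_mem _ fun j _ => Submodule.smul_mem _ _ ?_
        exact Submodule.subset_span ⟨_, h j, rfl⟩
      rwa [← decomp v] at hv
  -- bracket powers are D-stable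
  have brk_stable : ∀ M : Submodule R (Fin l → R), DStable Q (brkPow Q M).toAddSubgroup := by
    intro M φ hφ v hv
    rw [Submodule.mem_toAddSubgroup, mem_brk] at hv
    rw [Submodule.mem_toAddSubgroup, mem_brk]
    intro j
    have expand : ∀ x : R, φ x = ∑ k, A x k ^ Q * φ (b k) := by
      intro x
      conv_lhs => rw [hA x]
      rw [map_sum]
      exact Finset.sum_congr rfl fun k _ => hφ _ _
    have h1 : (fun i => A (φ (v i)) j) = ∑ k, A (φ (b k)) j • (fun i => A (v i) k) := by
      funext i
      rw [Finset.sum_apply]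
      simp only [Pi.smul_apply, smul_eq_mul]
      calc A (φ (v i)) j = A (∑ k, A (v i) k ^ Q * φ (b k)) j := by rw [← expand]
        _ = ∑ k, A (A (v i) k ^ Q * φ (b k)) j := A_sum _ _ j
        _ = ∑ k, A (φ (b k)) j * A (v i) k := by
            exact Finset.sum_congr rfl fun k _ => by rw [A_smul, mul_comm]
    show (fun i => A (φ (v i)) j) ∈ M
    rw [h1]
    exact Submodule.sum_mem _ fun k _ => Submodule.smul_mem _ _ (hv k)
  -- part 1
  have part1 : ∀ V : AddSubgroup (Fin l → R),
      DStable Q V ↔ ∃ N : Submodule R (Fin l → R), V = (brkPow Q N).toAddSubgroup := by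
    intro V
    constructor
    · intro hV
      have hVsmul : ∀ (r : R) (v : Fin l → R), v ∈ V → r • v ∈ V := by
        intro r v hv
        have hlin : IsQLinear Q (AddMonoidHom.mulLeft r) := by
          intro a x
          show r * (a ^ Q * x) = a ^ Q * (r * x)
          ring
        have := hV (AddMonoidHom.mulLeft r) hlin v hv
        exact this
      set W : Submodule R (Fin l → R) :=
        { carrier := {w | (fun i => w i ^ Q) ∈ V}
          add_mem' := by
            intro x y hx hy
            show (fun i => (x + y) i ^ Q) ∈ V
            have h1 : (fun i => (x + y) i ^ Q) = (fun i => x i ^ Q) + fun i => y i ^ Q := by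
              funext i
              simp only [Pi.add_apply, frob_add]
            rw [h1]
            exact V.add_mem hx hy
          zero_mem' := by
            show (fun i => (0 : Fin l → R) i ^ Q) ∈ V
            have h1 : (fun i => (0 : Fin l → R) i ^ Q) = 0 := by
              funext i; simp [zero_pow hQpos.ne']
            rw [h1]; exact V.zero_mem
          smul_mem' := by
            intro r x hx
            show (fun i => (r • x) i ^ Q) ∈ V
            have h1 : (fun i => (r • x) i ^ Q) = r ^ Q • fun i => x i ^ Q := by
              funext i
              simp [mul_pow]
            rw [h1]
            exact hVsmul _ _ hx } with hW
      refine ⟨W, ?_⟩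
      ext v
      rw [Submodule.mem_toAddSubgroup, mem_brk]
      constructor
      · intro hv j
        have hlin : IsQLinear Q (AddMonoidHom.mk' (fun x => A x j ^ Q)
            (fun x y => by show A (x + y) j ^ Q = A x j ^ Q + A y j ^ Q; rw [A_add, frob_add])) := by
          intro a x
          show A (a ^ Q * x) j ^ Q = a ^ Q * A x j ^ Q
          rw [A_smul, mul_pow]
        exact hV _ hlin v hv
      · intro h
        have hv : (∑ j, b j • (fun i => A (v i) j ^ Q)) ∈ V :=
          AddSubgroup.sum_mem V fun j _ => hVsmul (b j) _ (h j)
        rwa [← decomp v] at hv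
    · rintro ⟨N, rfl⟩
      exact brk_stable N
  refine ⟨part1, fun N => ?_⟩
  have hNle : N ≤ brkPow Q (invBrkPow Q N) := by
    intro v hv
    rw [mem_brk]
    intro j
    rw [invBrkPow, Submodule.mem_sInf]
    intro N' hN'
    exact (mem_brk N' v).mp (hN' hv) j
  apply le_antisymm
  · exact sInf_le ⟨fun v hv => hNle hv, brk_stable _⟩
  · refine le_sInf ?_
    rintro V ⟨hVN, hVst⟩
    obtain ⟨N', rfl⟩ := (part1 V).mp hVst
    have h1 : N ≤ brkPow Q N' := fun v hv => hVN hv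
    have h2 : invBrkPow Q N ≤ N' := sInf_le h1
    have h3 : brkPow Q (invBrkPow Q N) ≤ brkPow Q N' :=
      Submodule.span_mono (Set.image_mono h2)
    exact fun v hv => h3 hv
end

section
/- Let R be a commutative ring of prime characteristic p > 0, q = p^γ a power of p, S = R[t], l ≥ 1, and A(t) ∈ M_l(S), with matrix polynomials H^e_n(τ) defined by A(t)^{e−1} = Σ_{0≤n<q^e} H^e_n(t^{q^e}) t^n. Then for every e ≥ 1, the smallest additive subgroup of S^{⊕l} containing A(t)^{e−1}·S^{⊕l} and stable under multiplication by t, under each operator θ_i = t^{p^{i−1}} ∂_t^{[p^{i−1}]} for 1 ≤ i ≤ γe, and under the coefficientwise action of every q^e-linear additive endomorphism of R, equals the additive subgroup of S^{⊕l} generated by { φ(t^a · H^e_n(t^{q^e}) t^n v) : φ a q^e-linear additive endomorphism of R acting coefficientwise, a ≥ 0, 0 ≤ n < q^e, v ∈ R^{⊕l} }. -/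
/-! Write `Q = q^e = p^{γe}` and `B = A(t)^{e-1} = Σ_{n<Q} H_n(t^Q) t^n`. For constant `v`, the
`n`-th residue piece `H_n(t^Q) t^n v` of `B v` is supported on exponents `≡ n (mod Q)`, and by
Lucas' theorem `θ_{j+1} = t^{p^j} ∂^{[p^j]}` acts on such a polynomial as multiplication by the
`j`-th base-`p` digit of `n`. Thus the pieces are simultaneous eigenvectors of `θ_1, …, θ_{γe}`
with pairwise distinct digit vectors. In a subgroup stable under `θ`, the operator
`∏_{d ≠ d₀} (θ - d)` extracts the `d₀`-eigencomponent up to a factor prime to `p`; separating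
digit by digit puts every piece into the closure. Conversely the subgroup generated by the
`q^e`-linear images of `t^a` times the pieces contains `B·S^l` and is stable under `t`, under each
`θ_i` (which acts on every generator by a scalar) and under `q^e`-linear maps (which compose). -/

noncomputable section

open Polynomial

/-- The Frobenius-twisted product `A(t)^{e-1} = A(t)^{[q^{e-1}]} ⋯ A(t)^{[q]} · A(t)`
(with `e` factors), where `B^{[m]}` denotes the matrix of entrywise `m`-th powers. -/
def twistProd {R : Type*} [CommRing R] {l : ℕ} (q : ℕ)
    (A : Matrix (Fin l) (Fin l) (Polynomial R)) : ℕ → Matrix (Fin l) (Fin l) (Polynomial R)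
  | 0 => 1
  | e + 1 => (Matrix.of fun i j => (A i j) ^ q ^ e) * twistProd q A e

/-- The matrix polynomial `H^e_n(τ)` extracted from `B = A(t)^{e-1}`: its `τ^k`-coefficient
is the coefficient of `t^{k q^e + n}` in `B`, so that `B = Σ_{0≤n<q^e} H^e_n(t^{q^e}) t^n`. -/
def Hmat {R : Type*} [CommRing R] {l : ℕ} (q e : ℕ)
    (B : Matrix (Fin l) (Fin l) (Polynomial R)) (n : ℕ) :
    Matrix (Fin l) (Fin l) (Polynomial R) :=
  Matrix.of fun i j =>
    ∑ kk ∈ Finset.range ((B i j).natDegree + 1), C ((B i j).coeff (kk * q ^ e + n)) * X ^ kk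

/-- The Euler operator `θ = t^c ∂_t^{[c]}` acting on a polynomial:
`r t^n ↦ binom(n,c) r t^n`. -/
def thetaOp {R : Type*} [CommRing R] (c : ℕ) (f : Polynomial R) : Polynomial R :=
  f.sum fun n a => C ((n.choose c : R) * a) * X ^ n

/-- The coefficientwise action of an additive endomorphism `φ` of `R` on a polynomial. -/
def coeffMap {R : Type*} [CommRing R] (φ : R →+ R) (f : Polynomial R) : Polynomial R :=
  f.sum fun n a => C (φ a) * X ^ n

/-- `D^e_R[t,θ_1,…,θ_{γe}]·T`: the smallest additive subgroup of `R[t]^{⊕l}` containing `T`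
and stable under multiplication by `t`, under `θ_i = t^{p^{i-1}} ∂_t^{[p^{i-1}]}` for
`1 ≤ i ≤ γe`, and under the coefficientwise action of every `Q = q^e`-linear additive
endomorphism of `R`. -/
def VClosure {R : Type*} [CommRing R] {l : ℕ} (p γe Q : ℕ)
    (T : Set (Fin l → Polynomial R)) : AddSubgroup (Fin l → Polynomial R) :=
  sInf {V : AddSubgroup (Fin l → Polynomial R) | T ⊆ ↑V ∧
    (∀ v ∈ V, (fun i => X * v i) ∈ V) ∧
    (∀ i : ℕ, 1 ≤ i → i ≤ γe → ∀ v ∈ V, (fun j => thetaOp (p ^ (i - 1)) (v j)) ∈ V) ∧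
    (∀ φ : R →+ R, IsQLinear Q φ → ∀ v ∈ V, (fun j => coeffMap φ (v j)) ∈ V)}

end

open Polynomial Finset

theorem Nat.mod_pow_succ_eq_iff {b j m n : ℕ} :
    m % b ^ (j + 1) = n % b ^ (j + 1) ↔
      m % b ^ j = n % b ^ j ∧ m / b ^ j % b = n / b ^ j % b := by
  have hlow (x : ℕ) : x % b ^ j = x % b ^ (j + 1) % b ^ j :=
    (Nat.mod_mod_of_dvd x (pow_dvd_pow b j.le_succ)).symm
  have hdigit (x : ℕ) : x / b ^ j % b = x % b ^ (j + 1) / b ^ j := by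
    rw [pow_succ, Nat.mod_mul_right_div_self]
  constructor
  · intro h
    rw [hlow m, hlow n, hdigit m, hdigit n, h]
    exact ⟨rfl, rfl⟩
  · rintro ⟨hl, hd⟩
    rw [Nat.mod_pow_succ, Nat.mod_pow_succ, hl, hd]

theorem Nat.choose_prime_pow_modEq (p : ℕ) [Fact p.Prime] (m j : ℕ) :
    m.choose (p ^ j) ≡ m / p ^ j % p [MOD p] := by
  induction j generalizing m with
  | zero => simpa using (Nat.mod_modEq m p).symm
  | succ j ih =>
    have hp : 0 < p := (Fact.out : p.Prime).pos
    refine Choose.choose_modEq_choose_mod_mul_choose_div_nat.trans ?_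
    rw [pow_succ, Nat.mul_mod_left, Nat.choose_zero_right, one_mul, Nat.mul_div_cancel _ hp,
      mul_comm, ← Nat.div_div_eq_div_mul]
    exact ih (m / p)

section Separation

variable {M : Type*} [AddCommGroup M] {V : AddSubgroup M}

theorem AddSubgroup.mem_of_zsmul_mem_of_isCoprime {n c : ℤ} (hnc : IsCoprime n c) {x : M}
    (hx : n • x = 0) (hcx : c • x ∈ V) : x ∈ V := by
  obtain ⟨u, w, huw⟩ := hnc
  have hx' : x = w • c • x := by
    calc x = (u * n + w * c) • x := by rw [huw, one_smul]
      _ = w • c • x := by rw [add_smul, mul_smul, hx, smul_zero, zero_add, mul_smul]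
  rw [hx']
  exact V.zsmul_mem hcx w

theorem sum_prod_sub_smul_mem (θ : M →+ M) (hθ : ∀ x ∈ V, θ x ∈ V) {ι : Type*} (s : Finset ι)
    (g : ι → M) (c : ι → ℕ) (hg : ∀ i ∈ s, θ (g i) = c i • g i) (hsum : ∑ i ∈ s, g i ∈ V)
    (t : Finset ℕ) : ∑ i ∈ s, (∏ d ∈ t, ((c i : ℤ) - d)) • g i ∈ V := by
  classical
  induction t using Finset.induction_on with
  | empty => simpa using hsum
  | insert a t ha ih =>
    have key : ∑ i ∈ s, (∏ d ∈ insert a t, ((c i : ℤ) - d)) • g i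
        = θ (∑ i ∈ s, (∏ d ∈ t, ((c i : ℤ) - d)) • g i)
          - (a : ℤ) • ∑ i ∈ s, (∏ d ∈ t, ((c i : ℤ) - d)) • g i := by
      rw [map_sum, Finset.smul_sum, ← Finset.sum_sub_distrib]
      refine Finset.sum_congr rfl fun i hi => ?_
      rw [Finset.prod_insert ha, map_zsmul, hg i hi]
      module
    rw [key]
    exact sub_mem (hθ _ ih) (V.zsmul_mem ih _)

variable {p : ℕ} [Fact p.Prime]

theorem sum_filter_mem_of_eigen (hM : ∀ x : M, p • x = 0) (θ : M →+ M)
    (hθ : ∀ x ∈ V, θ x ∈ V) {ι : Type*} (s : Finset ι) (g : ι → M) (c : ι → ℕ)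
    (hc : ∀ i ∈ s, c i < p) (hg : ∀ i ∈ s, θ (g i) = c i • g i) (hsum : ∑ i ∈ s, g i ∈ V)
    {d₀ : ℕ} (hd₀ : d₀ < p) : ∑ i ∈ s with c i = d₀, g i ∈ V := by
  -- The weight `∏_{d ≠ d₀} (c i - d)` vanishes unless `c i = d₀`, and is then prime to `p`.
  have hprod := sum_prod_sub_smul_mem θ hθ s g c hg hsum ((range p).erase d₀)
  have key : ∑ i ∈ s, (∏ d ∈ (range p).erase d₀, ((c i : ℤ) - d)) • g i
      = (∏ d ∈ (range p).erase d₀, ((d₀ : ℤ) - d)) • ∑ i ∈ s with c i = d₀, g i := by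
    rw [Finset.sum_filter, Finset.smul_sum]
    refine Finset.sum_congr rfl fun i hi => ?_
    split_ifs with h
    · rw [h]
    · rw [Finset.prod_eq_zero (i := c i) (by simp [h, hc i hi]) (sub_self _), zero_smul,
        smul_zero]
  refine AddSubgroup.mem_of_zsmul_mem_of_isCoprime ?_ (by rw [natCast_zsmul]; exact hM _)
    (key ▸ hprod)
  rw [Prime.coprime_iff_not_dvd (Nat.prime_iff_prime_int.mp Fact.out),
    ← ZMod.intCast_zmod_eq_zero_iff_dvd]
  push_cast
  rw [← Ne, Finset.prod_ne_zero_iff]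
  intro d hd
  rw [sub_ne_zero, Ne, ZMod.natCast_eq_natCast_iff', Nat.mod_eq_of_lt hd₀,
    Nat.mod_eq_of_lt (mem_range.mp (mem_of_mem_erase hd))]
  exact (ne_of_mem_erase hd).symm

theorem mem_of_sum_mem_of_digit_eigen (hM : ∀ x : M, p • x = 0) (k : ℕ) (θ : ℕ → M →+ M)
    (hθ : ∀ j < k, ∀ x ∈ V, θ j x ∈ V) (g : ℕ → M)
    (hg : ∀ n < p ^ k, ∀ j < k, θ j (g n) = (n / p ^ j % p) • g n)
    (hsum : ∑ n ∈ range (p ^ k), g n ∈ V) {n₀ : ℕ} (hn₀ : n₀ < p ^ k) : g n₀ ∈ V := by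
  have hp : 0 < p := (Fact.out : p.Prime).pos
  have hclass : ∀ j ≤ k, ∑ n ∈ range (p ^ k) with n % p ^ j = n₀ % p ^ j, g n ∈ V := by
    intro j hj
    induction j with
    | zero => simpa [Nat.mod_one] using hsum
    | succ j ih =>
      have h := sum_filter_mem_of_eigen hM (θ j) (hθ j hj) _ g (fun n => n / p ^ j % p)
        (fun n _ => Nat.mod_lt _ hp)
        (fun n hn => hg n (mem_range.mp (mem_filter.mp hn).1) j hj) (ih (by omega))
        (Nat.mod_lt (n₀ / p ^ j) hp)
      simpa only [Finset.filter_filter, ← Nat.mod_pow_succ_eq_iff] using h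
  have hsingle : {n ∈ range (p ^ k) | n % p ^ k = n₀ % p ^ k} = {n₀} := by
    ext n
    simp only [mem_filter, mem_range, mem_singleton]
    constructor
    · rintro ⟨hn, hmod⟩
      rwa [Nat.mod_eq_of_lt hn, Nat.mod_eq_of_lt hn₀] at hmod
    · rintro rfl
      exact ⟨hn₀, rfl⟩
  simpa [hsingle] using hclass k le_rfl

end Separation

theorem AddSubgroup.comp_mem_closure {ι A : Type*} [AddGroup A] {Y : Set (ι → A)} (f : A →+ A)
    (hY : ∀ y ∈ Y, f ∘ y ∈ AddSubgroup.closure Y) {w : ι → A}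
    (hw : w ∈ AddSubgroup.closure Y) : f ∘ w ∈ AddSubgroup.closure Y :=
  (AddSubgroup.closure_le (K := (AddSubgroup.closure Y).comap (f.compLeft ι))).mpr hY hw

noncomputable section Operators

variable {R : Type*} [CommRing R]

theorem coeff_coeffMap (φ : R →+ R) (f : R[X]) (m : ℕ) :
    (coeffMap φ f).coeff m = φ (f.coeff m) := by
  simp only [coeffMap, Polynomial.sum_def, finsetSum_coeff, coeff_C_mul_X_pow]
  rw [Finset.sum_ite_eq]
  split_ifs with h
  · rfl
  · rw [notMem_support_iff.mp h, map_zero]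

theorem coeff_thetaOp (c : ℕ) (f : R[X]) (m : ℕ) :
    (thetaOp c f).coeff m = (m.choose c : R) * f.coeff m := by
  simp only [thetaOp, Polynomial.sum_def, finsetSum_coeff, coeff_C_mul_X_pow]
  rw [Finset.sum_ite_eq]
  split_ifs with h
  · rfl
  · rw [notMem_support_iff.mp h, mul_zero]

def coeffMapHom (φ : R →+ R) : R[X] →+ R[X] :=
  AddMonoidHom.mk' (coeffMap φ) fun f g => by ext m; simp [coeff_coeffMap]

def thetaOpHom (c : ℕ) : R[X] →+ R[X] :=
  AddMonoidHom.mk' (thetaOp c) fun f g => by ext m; simp [coeff_thetaOp, mul_add]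

theorem coeffMap_id (f : R[X]) : coeffMap (AddMonoidHom.id R) f = f := by
  ext m; simp [coeff_coeffMap]

theorem coeffMap_coeffMap (φ ψ : R →+ R) (f : R[X]) :
    coeffMap φ (coeffMap ψ f) = coeffMap (φ.comp ψ) f := by
  ext m; simp [coeff_coeffMap]

theorem coeffMap_X_mul (φ : R →+ R) (f : R[X]) : coeffMap φ (X * f) = X * coeffMap φ f := by
  ext m
  cases m <;> simp [coeff_coeffMap, coeff_X_mul]

theorem IsQLinear.comp {Q : ℕ} {φ ψ : R →+ R} (hφ : IsQLinear Q φ) (hψ : IsQLinear Q ψ) :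
    IsQLinear Q (φ.comp ψ) := fun a b => by
  rw [AddMonoidHom.comp_apply, hψ, hφ, AddMonoidHom.comp_apply]

def SupportModEq (Q r : ℕ) (f : R[X]) : Prop := ∀ m ∈ f.support, m ≡ r [MOD Q]

theorem SupportModEq.coeffMap {Q r : ℕ} {f : R[X]} (h : SupportModEq Q r f) (φ : R →+ R) :
    SupportModEq Q r (coeffMap φ f) := fun m hm =>
  h m (mem_support_iff.mpr fun h0 => mem_support_iff.mp hm (by rw [coeff_coeffMap, h0, map_zero]))

theorem SupportModEq.X_pow_mul {Q r : ℕ} {f : R[X]} (h : SupportModEq Q r f) (a : ℕ) :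
    SupportModEq Q (a + r) (X ^ a * f) := fun m hm => by
  rw [mem_support_iff, mul_comm, coeff_mul_X_pow'] at hm
  split_ifs at hm with ha
  · have := (h (m - a) (mem_support_iff.mpr hm)).add_left a
    rwa [Nat.add_sub_cancel' ha] at this
  · exact absurd rfl hm

theorem SupportModEq.thetaOp_prime_pow {p : ℕ} [Fact p.Prime] [CharP R p] {Q r j : ℕ}
    {f : R[X]} (h : SupportModEq Q r f) (hQ : p ^ (j + 1) ∣ Q) :
    thetaOp (p ^ j) f = (r / p ^ j % p) • f := by
  ext m
  rw [coeff_thetaOp, coeff_smul, nsmul_eq_mul]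
  by_cases hm : m ∈ f.support
  · have hdigit := (Nat.mod_pow_succ_eq_iff.mp ((h m hm).of_dvd hQ)).2
    rw [(CharP.natCast_eq_natCast R p).mpr (Nat.choose_prime_pow_modEq p m j), hdigit]
  · rw [notMem_support_iff.mp hm, mul_zero, mul_zero]

end Operators

noncomputable section ResidueComponents

variable {R : Type*} [CommRing R] {l : ℕ}

theorem coeff_comp_X_pow_mul_X_pow {Q n : ℕ} (hn : n < Q) (f : R[X]) (m : ℕ) :
    (f.comp (X ^ Q) * X ^ n).coeff m = if m % Q = n then f.coeff (m / Q) else 0 := by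
  have hQ : 0 < Q := by omega
  rw [← expand_eq_comp_X_pow, coeff_mul_X_pow', coeff_expand hQ]
  by_cases hm : m % Q = n
  · have hdecomp : m - n = Q * (m / Q) := by
      have := Nat.div_add_mod m Q; omega
    rw [if_pos (hm ▸ Nat.mod_le m Q), hdecomp, if_pos (dvd_mul_right _ _), if_pos hm,
      Nat.mul_div_cancel_left _ hQ]
  · rw [if_neg hm]
    split_ifs with hle hdvd
    · refine absurd ?_ hm
      rw [← Nat.mod_eq_of_lt hn]
      exact ((Nat.modEq_iff_dvd' hle).mpr hdvd).symm
    all_goals rfl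

theorem coeff_Hmat {q e : ℕ} (hQ : 0 < q ^ e) (B : Matrix (Fin l) (Fin l) R[X]) (n : ℕ)
    (i j : Fin l) (k : ℕ) : (Hmat q e B n i j).coeff k = (B i j).coeff (k * q ^ e + n) := by
  simp only [Hmat, Matrix.of_apply, finsetSum_coeff, coeff_C_mul_X_pow, Finset.sum_ite_eq,
    mem_range]
  split_ifs with hk
  · rfl
  · refine (coeff_eq_zero_of_natDegree_lt ?_).symm
    nlinarith

def residueComponent (q e : ℕ) (B : Matrix (Fin l) (Fin l) R[X]) (n : ℕ) (v : Fin l → R) :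
    Fin l → R[X] :=
  fun i => (∑ j, (Hmat q e B n i j).comp (X ^ q ^ e) * C (v j)) * X ^ n

theorem coeff_residueComponent {q e n : ℕ} (hn : n < q ^ e) (B : Matrix (Fin l) (Fin l) R[X])
    (v : Fin l → R) (i : Fin l) (m : ℕ) :
    (residueComponent q e B n v i).coeff m
      = if m % q ^ e = n then ((B.mulVec fun j => C (v j)) i).coeff m else 0 := by
  simp only [residueComponent, Matrix.mulVec, dotProduct, Finset.sum_mul, finsetSum_coeff,
    mul_right_comm _ (C _), coeff_mul_C, coeff_comp_X_pow_mul_X_pow hn,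
    coeff_Hmat (n.zero_le.trans_lt hn)]
  split_ifs with hm
  · rw [← hm, Nat.div_add_mod']
  · simp

theorem sum_residueComponent {q e : ℕ} (hQ : 0 < q ^ e) (B : Matrix (Fin l) (Fin l) R[X])
    (v : Fin l → R) :
    ∑ n ∈ range (q ^ e), residueComponent q e B n v = B.mulVec fun j => C (v j) := by
  funext i
  ext m
  simp only [Finset.sum_apply, finsetSum_coeff]
  rw [Finset.sum_congr rfl fun n hn => coeff_residueComponent (mem_range.mp hn) B v i m,
    Finset.sum_ite_eq, if_pos (mem_range.mpr (Nat.mod_lt m hQ))]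

theorem supportModEq_residueComponent {q e n : ℕ} (hn : n < q ^ e)
    (B : Matrix (Fin l) (Fin l) R[X]) (v : Fin l → R) (i : Fin l) :
    SupportModEq (q ^ e) n (residueComponent q e B n v i) := fun m hm => by
  rw [mem_support_iff, coeff_residueComponent hn] at hm
  split_ifs at hm with h
  · rw [Nat.ModEq, h, Nat.mod_eq_of_lt hn]
  · exact absurd rfl hm

theorem mulVec_eq_sum_X_pow_smul (B : Matrix (Fin l) (Fin l) R[X]) (u : Fin l → R[X]) {N : ℕ}
    (hN : ∀ j, (u j).natDegree < N) :
    B.mulVec u = ∑ a ∈ range N, (X ^ a : R[X]) • B.mulVec fun j => C ((u j).coeff a) := by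
  have hu : u = ∑ a ∈ range N, (X ^ a : R[X]) • fun j => C ((u j).coeff a) := by
    funext j
    conv_lhs => rw [as_sum_range' (u j) N (hN j)]
    simp only [Finset.sum_apply, Pi.smul_apply, smul_eq_mul, ← C_mul_X_pow_eq_monomial, mul_comm]
  conv_lhs => rw [hu]
  simp only [Matrix.mulVec_sum, Matrix.mulVec_smul]

end ResidueComponents

section Generators

variable {R : Type*} [CommRing R] {l : ℕ}

def residueGenerators (q e : ℕ) (B : Matrix (Fin l) (Fin l) R[X]) : Set (Fin l → R[X]) :=
  {y | ∃ φ : R →+ R, IsQLinear (q ^ e) φ ∧ ∃ (a n : ℕ), n < q ^ e ∧ ∃ v : Fin l → R,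
    y = fun i => coeffMap φ (X ^ a * residueComponent q e B n v i)}

theorem mulVec_mem_closure_residueGenerators {q e : ℕ} (hQ : 0 < q ^ e)
    (B : Matrix (Fin l) (Fin l) R[X]) (u : Fin l → R[X]) :
    B.mulVec u ∈ AddSubgroup.closure (residueGenerators q e B) := by
  obtain ⟨N, hN⟩ : ∃ N, ∀ j, (u j).natDegree < N :=
    ⟨univ.sup (fun j => (u j).natDegree) + 1,
      fun j => Nat.lt_succ_of_le (le_sup (f := fun j => (u j).natDegree) (mem_univ j))⟩
  rw [mulVec_eq_sum_X_pow_smul B u hN]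
  refine AddSubgroup.sum_mem _ fun a _ => ?_
  rw [← sum_residueComponent hQ, Finset.smul_sum]
  refine AddSubgroup.sum_mem _ fun n hn => AddSubgroup.subset_closure ?_
  refine ⟨AddMonoidHom.id R, fun _ _ => rfl, a, n, mem_range.mp hn, fun j => (u j).coeff a, ?_⟩
  funext i
  rw [coeffMap_id]
  rfl

theorem thetaOp_residueGenerator {p : ℕ} [Fact p.Prime] [CharP R p] {q e k : ℕ}
    (hQ : q ^ e = p ^ k) {B : Matrix (Fin l) (Fin l) R[X]} {y : Fin l → R[X]}
    (hy : y ∈ residueGenerators q e B) {j : ℕ} (hj : j < k) :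
    ∃ d : ℕ, (fun i => thetaOp (p ^ j) (y i)) = d • y := by
  obtain ⟨φ, -, a, n, hn, v, rfl⟩ := hy
  refine ⟨(a + n) / p ^ j % p, funext fun i => ?_⟩
  exact (((supportModEq_residueComponent hn B v i).X_pow_mul a).coeffMap φ).thetaOp_prime_pow
    (hQ ▸ pow_dvd_pow p hj)

variable {p k q e : ℕ} [Fact p.Prime] [CharP R p] (hQ : q ^ e = p ^ k)
  (B : Matrix (Fin l) (Fin l) R[X])
include hQ

theorem vClosure_le_closure_residueGenerators :
    VClosure p k (q ^ e) {w | ∃ u, w = B.mulVec u}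
      ≤ AddSubgroup.closure (residueGenerators q e B) := by
  have hQ0 : 0 < q ^ e := hQ ▸ pow_pos (Fact.out : p.Prime).pos k
  refine sInf_le ⟨?_, fun w hw => ?_, fun i hi hik w hw => ?_, fun φ hφ w hw => ?_⟩
  · rintro _ ⟨u, rfl⟩
    exact mulVec_mem_closure_residueGenerators hQ0 B u
  · refine AddSubgroup.comp_mem_closure (AddMonoidHom.mulLeft X) ?_ hw
    rintro _ ⟨φ, hφ, a, n, hn, v, rfl⟩
    refine AddSubgroup.subset_closure ⟨φ, hφ, a + 1, n, hn, v, funext fun i => ?_⟩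
    simp [← coeffMap_X_mul, pow_succ', mul_assoc]
  · refine AddSubgroup.comp_mem_closure (thetaOpHom (p ^ (i - 1))) (fun y hy => ?_) hw
    obtain ⟨d, hd⟩ := thetaOp_residueGenerator hQ hy (j := i - 1) (by omega)
    change (fun i => thetaOp _ (y i)) ∈ _
    rw [hd]
    exact AddSubgroup.nsmul_mem _ (AddSubgroup.subset_closure hy) d
  · refine AddSubgroup.comp_mem_closure (coeffMapHom φ) ?_ hw
    rintro _ ⟨ψ, hψ, a, n, hn, v, rfl⟩
    exact AddSubgroup.subset_closure
      ⟨φ.comp ψ, hφ.comp hψ, a, n, hn, v, funext fun i => coeffMap_coeffMap φ ψ _⟩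

theorem residueGenerators_subset_vClosure :
    residueGenerators q e B ⊆ VClosure p k (q ^ e) {w | ∃ u, w = B.mulVec u} := by
  rintro _ ⟨φ, hφ, a, n, hn, v, rfl⟩
  rw [SetLike.mem_coe, VClosure, AddSubgroup.mem_sInf]
  rintro V ⟨hT, hX, hθ, hφV⟩
  have hQ0 : 0 < q ^ e := hQ ▸ pow_pos (Fact.out : p.Prime).pos k
  have hcomponent : residueComponent q e B n v ∈ V := by
    refine mem_of_sum_mem_of_digit_eigen (p := p) (fun x => ?_) k
      (fun j => (thetaOpHom (p ^ j)).compLeft (Fin l))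
      (fun j hj x hx => hθ (j + 1) (by omega) (by omega) x hx)
      (fun n => residueComponent q e B n v) (fun n' hn' j hj => funext fun i => ?_) ?_ (hQ ▸ hn)
    · funext i
      ext m
      simp [CharP.cast_eq_zero]
    · exact (supportModEq_residueComponent (hQ ▸ hn') B v i).thetaOp_prime_pow
        (hQ ▸ pow_dvd_pow p hj)
    · rw [← hQ, sum_residueComponent hQ0]
      exact hT ⟨_, rfl⟩
  have hXpow : ∀ w ∈ V, (fun i => X ^ a * w i) ∈ V := by
    induction a with
    | zero => simp
    | succ a ih => exact fun w hw => by simpa [pow_succ', mul_assoc] using hX _ (ih w hw)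
  exact hφV φ hφ _ (hXpow _ hcomponent)

theorem vClosure_mulVec_eq_closure_residueGenerators :
    VClosure p k (q ^ e) {w | ∃ u, w = B.mulVec u}
      = AddSubgroup.closure (residueGenerators q e B) :=
  le_antisymm (vClosure_le_closure_residueGenerators hQ B)
    ((AddSubgroup.closure_le _).mpr (residueGenerators_subset_vClosure hQ B))

end Generators

open Polynomial in
theorem stmt_17_general {R : Type*} [CommRing R] (p : ℕ) [Fact p.Prime] [CharP R p]
    (γ : ℕ) (q : ℕ) (hq : q = p ^ γ)
    (l : ℕ) (A : Matrix (Fin l) (Fin l) (Polynomial R))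
    (e : ℕ) :
    VClosure p (γ * e) (q ^ e)
        {w : Fin l → Polynomial R | ∃ u : Fin l → Polynomial R, w = (twistProd q A e).mulVec u}
      = AddSubgroup.closure
          {y : Fin l → Polynomial R | ∃ φ : R →+ R, IsQLinear (q ^ e) φ ∧
            ∃ (a n : ℕ), n < q ^ e ∧ ∃ v : Fin l → R,
              y = fun i => coeffMap φ (X ^ a *
                ((∑ j, (Hmat q e (twistProd q A e) n i j).comp (X ^ q ^ e) * C (v j)) * X ^ n))} :=
  vClosure_mulVec_eq_closure_residueGenerators (by rw [hq, pow_mul]) (twistProd q A e)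

open Polynomial in
theorem stmt_17 {R : Type*} [CommRing R] (p : ℕ) [Fact p.Prime] [CharP R p]
    (γ : ℕ) (hγ : 1 ≤ γ) (q : ℕ) (hq : q = p ^ γ)
    (l : ℕ) (hl : 1 ≤ l) (A : Matrix (Fin l) (Fin l) (Polynomial R))
    (e : ℕ) (he : 1 ≤ e) :
    VClosure p (γ * e) (q ^ e)
        {w : Fin l → Polynomial R | ∃ u : Fin l → Polynomial R, w = (twistProd q A e).mulVec u}
      = AddSubgroup.closure
          {y : Fin l → Polynomial R | ∃ φ : R →+ R, IsQLinear (q ^ e) φ ∧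
            ∃ (a n : ℕ), n < q ^ e ∧ ∃ v : Fin l → R,
              y = fun i => coeffMap φ (X ^ a *
                ((∑ j, (Hmat q e (twistProd q A e) n i j).comp (X ^ q ^ e) * C (v j)) * X ^ n))} :=
  stmt_17_general p γ q hq l A e
end
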